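/- Variance inflation with misspecified outcome regressions: with Ψ₁ as above and Ψ₃ = D(Y-m̃₁(X))/p(X) - (1-D)(Y-m̃₀(X))/(1-p(X)) + m̃₁(X) - m̃₀(X) using the true propensity score but misspecified m̃₁, m̃₀, we have E[Ψ₃²|X] - E[Ψ₁²|X] = E[ ((1 - D/p(X))(m̃₁(X)-m₁(X)) - (1 - (1-D)/(1-p(X)))(m̃₀(X)-m₀(X)))² | X ] ≥ 0. In particular σ₃²(x₁) ≥ σ₁²(x₁) for conditional variances given X₁ = x₁. -/

import Mathlib

/-!
Writing `Δ := Ψ₃ - Ψ₁`, one has `Δ = c · (D - p)` with `c = -((m̃₁ - m₁)/p + (m̃₀ - m₀)/(1 - p))`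
a function of `X`. Because `D` is binary, `(D - p) Ψ₁` is a combination, with `X`-measurable
coefficients, of `D (Y - m₁)`, `(1 - D)(Y - m₀)` and `D - p`, all of which have conditional
mean zero given `X`. Hence `E[Ψ₁ Δ | X] = 0` and `E[Ψ₃² | X] = E[Ψ₁² | X] + E[Δ² | X]`.
-/

open MeasureTheory ProbabilityTheory
open scoped ENNReal

section ConditionalExpectation

variable {α : Type*} {m mα : MeasurableSpace α} {μ : Measure α}

theorem memLp_top_inv_of_le_abs {f : α → ℝ} {ε : ℝ} (hε : 0 < ε) (hf : AEStronglyMeasurable f μ)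
    (hfε : ∀ᵐ ω ∂μ, ε ≤ |f ω|) : MemLp f⁻¹ ∞ μ := by
  refine memLp_top_of_bound hf.aemeasurable.inv.aestronglyMeasurable ε⁻¹ ?_
  filter_upwards [hfε] with ω h
  rw [Pi.inv_apply, norm_inv, Real.norm_eq_abs]
  exact inv_anti₀ hε h

theorem MemLp.of_mul_left_of_le_abs {p : ℝ≥0∞} {f g : α → ℝ} {ε : ℝ} (hε : 0 < ε)
    (hf : AEStronglyMeasurable f μ) (hfε : ∀ᵐ ω ∂μ, ε ≤ |f ω|) (hfg : MemLp (f * g) p μ) :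
    MemLp g p μ := by
  refine (hfg.mul (memLp_top_inv_of_le_abs hε hf hfε)).ae_eq ?_
  filter_upwards [hfε] with ω h
  simp [abs_pos.mp (hε.trans_le h)]

theorem memLp_top_of_eq_zero_or_eq_one {D : α → ℝ} (hD : AEStronglyMeasurable D μ)
    (hD01 : ∀ ω, D ω = 0 ∨ D ω = 1) : MemLp D ∞ μ :=
  memLp_top_of_bound hD 1 <| ae_of_all _ fun ω => by rcases hD01 ω with h | h <;> simp [h]

theorem condExp_mul_eq_zero_of_condExp_eq_zero {k W : α → ℝ} (hk : StronglyMeasurable[m] k)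
    (hkW : Integrable (k * W) μ) (hW : Integrable W μ) (h : μ[W | m] =ᵐ[μ] 0) :
    μ[k * W | m] =ᵐ[μ] 0 := by
  filter_upwards [condExp_mul_of_stronglyMeasurable_left hk hkW hW, h] with ω h₁ h₂
  simp [h₁, h₂]

theorem condExp_mul_sub_eq_zero {A Y g : α → ℝ} (hg : StronglyMeasurable[m] g)
    (hA : Integrable A μ) (hAY : Integrable (A * Y) μ) (hgA : Integrable (g * A) μ)
    (h : μ[A * Y | m] =ᵐ[μ] μ[A | m] * g) : μ[A * (Y - g) | m] =ᵐ[μ] 0 := by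
  rw [show A * (Y - g) = A * Y - g * A by ring]
  filter_upwards [condExp_sub hAY hgA m, condExp_mul_of_stronglyMeasurable_left hg hgA hA, h]
    with ω h₁ h₂ h₃
  simp only [Pi.sub_apply, Pi.mul_apply, Pi.zero_apply] at h₁ h₂ h₃ ⊢
  rw [h₁, h₂, h₃]
  ring

theorem condExp_add_sq_of_condExp_mul_eq_zero {f g : α → ℝ} (hf : MemLp f 2 μ)
    (hg : MemLp g 2 μ) (hfg : μ[f * g | m] =ᵐ[μ] 0) :
    μ[fun ω => (f ω + g ω) ^ 2 | m]
      =ᵐ[μ] μ[fun ω => f ω ^ 2 | m] + μ[fun ω => g ω ^ 2 | m] := by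
  have hsq : (fun ω => (f ω + g ω) ^ 2)
      = (fun ω => f ω ^ 2) + (fun ω => g ω ^ 2) + (2 : ℝ) • (f * g) := by
    funext ω
    simp only [Pi.add_apply, Pi.smul_apply, Pi.mul_apply, smul_eq_mul]
    ring
  rw [hsq]
  filter_upwards [condExp_add (hf.integrable_sq.add hg.integrable_sq)
      ((hf.integrable_mul hg).smul (2 : ℝ)) m, condExp_add hf.integrable_sq hg.integrable_sq m,
      condExp_smul (μ := μ) (2 : ℝ) (f * g) m, hfg] with ω h₁ h₂ h₃ h₄
  simp only [Pi.add_apply, Pi.smul_apply, smul_eq_mul, Pi.zero_apply] at h₁ h₂ h₃ h₄ ⊢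
  rw [h₁, h₂, h₃, h₄]
  ring

theorem condExp_sub_eq_zero_of_condExp_eq [IsFiniteMeasure μ] (hm : m ≤ mα) {f g : α → ℝ}
    (hf : Integrable f μ) (hg : StronglyMeasurable[m] g) (hgi : Integrable g μ)
    (h : μ[f | m] =ᵐ[μ] g) : μ[f - g | m] =ᵐ[μ] 0 := by
  filter_upwards [condExp_sub hf hgi m, h] with ω h₁ h₂
  rw [h₁, Pi.sub_apply, h₂, condExp_of_stronglyMeasurable hm hg hgi, sub_self, Pi.zero_apply]

theorem condExp_one_sub [IsFiniteMeasure μ] (hm : m ≤ mα) {f : α → ℝ} (hf : Integrable f μ) :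
    μ[1 - f | m] =ᵐ[μ] 1 - μ[f | m] := by
  have h := condExp_sub (integrable_const (1 : ℝ)) hf m
  rwa [condExp_const hm] at h

end ConditionalExpectation

section AIPW

variable {Ω : Type*} {m mΩ : MeasurableSpace Ω} {μ : Measure Ω}

noncomputable def aipwScore (D Y p t₁ t₀ : Ω → ℝ) (ω : Ω) : ℝ :=
  D ω * (Y ω - t₁ ω) / p ω - (1 - D ω) * (Y ω - t₀ ω) / (1 - p ω) + t₁ ω - t₀ ω

noncomputable def aipwCorrection (D p a₁ a₀ : Ω → ℝ) (ω : Ω) : ℝ :=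
  (1 - D ω / p ω) * a₁ ω - (1 - (1 - D ω) / (1 - p ω)) * a₀ ω

variable {D Y p P m₁ m₀ t₁ t₀ a₁ a₀ : Ω → ℝ} {ε : ℝ}

theorem aipwScore_eq_add (D Y p t₁ t₀ m₁ m₀ : Ω → ℝ) :
    aipwScore D Y p t₁ t₀ = aipwScore D Y p m₁ m₀ + aipwCorrection D p (t₁ - m₁) (t₀ - m₀) := by
  funext ω
  simp only [aipwScore, aipwCorrection, Pi.add_apply, Pi.sub_apply]
  ring

theorem aipwScore_congr_ae (h : p =ᵐ[μ] P) :
    aipwScore D Y p t₁ t₀ =ᵐ[μ] aipwScore D Y P t₁ t₀ := by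
  filter_upwards [h] with ω hω
  simp only [aipwScore, hω]

theorem aipwCorrection_congr_ae (h : p =ᵐ[μ] P) :
    aipwCorrection D p a₁ a₀ =ᵐ[μ] aipwCorrection D P a₁ a₀ := by
  filter_upwards [h] with ω hω
  simp only [aipwCorrection, hω]

theorem aipwCorrection_eq_mul (hp₁ : ∀ᵐ ω ∂μ, p ω ≠ 0) (hp₀ : ∀ᵐ ω ∂μ, 1 - p ω ≠ 0) :
    aipwCorrection D p a₁ a₀ =ᵐ[μ] (-(a₁ / p + a₀ / (1 - p))) * (D - p) := by
  filter_upwards [hp₁, hp₀] with ω h₁ h₀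
  simp only [aipwCorrection, Pi.mul_apply, Pi.neg_apply, Pi.add_apply, Pi.div_apply,
    Pi.sub_apply, Pi.one_apply]
  field_simp
  ring

theorem memLp_aipwScore (hD : MemLp D ∞ μ) (hp₁ : MemLp p⁻¹ ∞ μ) (hp₀ : MemLp (1 - p)⁻¹ ∞ μ)
    (hY₁ : MemLp (Y - t₁) 2 μ) (hY₀ : MemLp (Y - t₀) 2 μ) (ht : MemLp (t₁ - t₀) 2 μ) :
    MemLp (aipwScore D Y p t₁ t₀) 2 μ := by
  have h : aipwScore D Y p t₁ t₀
      = p⁻¹ * (D * (Y - t₁)) - (1 - p)⁻¹ * ((1 - D) * (Y - t₀)) + (t₁ - t₀) := by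
    funext ω
    simp only [aipwScore, Pi.add_apply, Pi.sub_apply, Pi.mul_apply, Pi.inv_apply, Pi.one_apply]
    ring
  have hD₀ : MemLp (1 - D) ∞ μ := (memLp_top_const 1).sub hD
  rw [h]
  exact (((hY₁.mul (r := 2) hD).mul hp₁).sub ((hY₀.mul (r := 2) hD₀).mul hp₀)).add ht

theorem memLp_aipwCorrection (hD : MemLp D ∞ μ) (hp₁ : MemLp p⁻¹ ∞ μ)
    (hp₀ : MemLp (1 - p)⁻¹ ∞ μ) (ha₁ : MemLp a₁ 2 μ) (ha₀ : MemLp a₀ 2 μ) :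
    MemLp (aipwCorrection D p a₁ a₀) 2 μ := by
  have h : aipwCorrection D p a₁ a₀
      = (1 - p⁻¹ * D) * a₁ - (1 - (1 - p)⁻¹ * (1 - D)) * a₀ := by
    funext ω
    simp only [aipwCorrection, Pi.sub_apply, Pi.mul_apply, Pi.inv_apply, Pi.one_apply]
    ring
  have h1 : MemLp (1 : Ω → ℝ) ∞ μ := memLp_top_const 1
  rw [h]
  exact (ha₁.mul (h1.sub (hD.mul (r := ∞) hp₁))).sub
    (ha₀.mul (h1.sub ((h1.sub hD).mul (r := ∞) hp₀)))

theorem memLp_top_of_overlap (hε : 0 < ε) (hP : AEStronglyMeasurable P μ)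
    (hPb : ∀ᵐ ω ∂μ, ε ≤ P ω ∧ P ω ≤ 1 - ε) :
    MemLp P ∞ μ ∧ MemLp P⁻¹ ∞ μ ∧ MemLp (1 - P)⁻¹ ∞ μ := by
  refine ⟨memLp_top_of_bound hP 1 ?_, memLp_top_inv_of_le_abs hε hP ?_,
    memLp_top_inv_of_le_abs hε (aestronglyMeasurable_const.sub hP) ?_⟩ <;>
    filter_upwards [hPb] with ω h
  · rw [Real.norm_eq_abs, abs_le]
    constructor <;> linarith
  · exact h.1.trans (le_abs_self _)
  · exact (le_sub_comm.mp h.2).trans (le_abs_self _)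

theorem condExp_sub_mul_aipwScore_eq_zero [IsFiniteMeasure μ] (hm : m ≤ mΩ) (hε : 0 < ε)
    (hD01 : ∀ ω, D ω = 0 ∨ D ω = 1) (hD : MemLp D ∞ μ)
    (hP : StronglyMeasurable[m] P) (hPb : ∀ᵐ ω ∂μ, ε ≤ P ω ∧ P ω ≤ 1 - ε)
    (hm₁₀ : StronglyMeasurable[m] (m₁ - m₀))
    (hY₁ : MemLp (Y - m₁) 2 μ) (hY₀ : MemLp (Y - m₀) 2 μ) (hm₁₀L : MemLp (m₁ - m₀) 2 μ)
    (h₁ : μ[D * (Y - m₁) | m] =ᵐ[μ] 0) (h₀ : μ[(1 - D) * (Y - m₀) | m] =ᵐ[μ] 0)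
    (hDP : μ[D - P | m] =ᵐ[μ] 0) :
    μ[(D - P) * aipwScore D Y P m₁ m₀ | m] =ᵐ[μ] 0 := by
  obtain ⟨hPt, hP₁, hP₀⟩ := memLp_top_of_overlap hε (hP.mono hm).aestronglyMeasurable hPb
  have hk₁ : MemLp (P⁻¹ - 1) ∞ μ := hP₁.sub (memLp_top_const 1)
  have hk₀ : MemLp ((1 - P)⁻¹ - 1) ∞ μ := hP₀.sub (memLp_top_const 1)
  have hW₁ : Integrable (D * (Y - m₁)) μ := (hY₁.mul (r := 2) hD).integrable one_le_two
  have hW₀ : Integrable ((1 - D) * (Y - m₀)) μ :=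
    (hY₀.mul (r := 2) ((memLp_top_const 1).sub hD)).integrable one_le_two
  have hDPi : Integrable (D - P) μ := (hD.sub hPt).integrable le_top
  -- `D (D - P) = (1 - P) D` and `(1 - D) (D - P) = -P (1 - D)` because `D` is binary.
  have hid : (D - P) * aipwScore D Y P m₁ m₀ =ᵐ[μ] (P⁻¹ - 1) * (D * (Y - m₁))
      + ((1 - P)⁻¹ - 1) * ((1 - D) * (Y - m₀)) + (m₁ - m₀) * (D - P) := by
    filter_upwards [hPb] with ω h
    have hP0 : P ω ≠ 0 := by linarith [h.1]
    have hP1 : 1 - P ω ≠ 0 := by linarith [h.2]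
    simp only [aipwScore, Pi.add_apply, Pi.sub_apply, Pi.mul_apply, Pi.inv_apply, Pi.one_apply]
    rcases hD01 ω with hd | hd <;> rw [hd] <;> field_simp <;> ring
  have hkW₁ := hW₁.mul_of_top_right hk₁
  have hkW₀ := hW₀.mul_of_top_right hk₀
  have hmDP := (hm₁₀L.integrable one_le_two).mul_of_top_left (hD.sub hPt)
  have hP' : Measurable[m] P := hP.measurable
  filter_upwards [condExp_congr_ae (m := m) hid, condExp_add (hkW₁.add hkW₀) hmDP m,
    condExp_add hkW₁ hkW₀ m,
    condExp_mul_eq_zero_of_condExp_eq_zero (k := P⁻¹ - 1)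
      (hP'.inv.sub measurable_const).stronglyMeasurable hkW₁ hW₁ h₁,
    condExp_mul_eq_zero_of_condExp_eq_zero (k := (1 - P)⁻¹ - 1)
      ((measurable_const.sub hP').inv.sub measurable_const).stronglyMeasurable hkW₀ hW₀ h₀,
    condExp_mul_eq_zero_of_condExp_eq_zero hm₁₀ hmDP hDPi hDP] with ω e e₁ e₂ z₁ z₀ z
  simp only [Pi.add_apply, Pi.zero_apply] at e e₁ e₂ z₁ z₀ z ⊢
  rw [e, e₁, e₂, z₁, z₀, z]
  simp

theorem condExp_aipwScore_mul_aipwCorrection_eq_zero [IsFiniteMeasure μ] (hm : m ≤ mΩ)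
    (hε : 0 < ε) (hD01 : ∀ ω, D ω = 0 ∨ D ω = 1) (hD : MemLp D ∞ μ)
    (hP : StronglyMeasurable[m] P) (hPb : ∀ᵐ ω ∂μ, ε ≤ P ω ∧ P ω ≤ 1 - ε)
    (hm₁₀ : StronglyMeasurable[m] (m₁ - m₀))
    (hY₁ : MemLp (Y - m₁) 2 μ) (hY₀ : MemLp (Y - m₀) 2 μ) (hm₁₀L : MemLp (m₁ - m₀) 2 μ)
    (ha₁ : StronglyMeasurable[m] a₁) (ha₀ : StronglyMeasurable[m] a₀)
    (ha₁L : MemLp a₁ 2 μ) (ha₀L : MemLp a₀ 2 μ)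
    (h₁ : μ[D * (Y - m₁) | m] =ᵐ[μ] 0) (h₀ : μ[(1 - D) * (Y - m₀) | m] =ᵐ[μ] 0)
    (hDP : μ[D - P | m] =ᵐ[μ] 0) :
    μ[aipwScore D Y P m₁ m₀ * aipwCorrection D P a₁ a₀ | m] =ᵐ[μ] 0 := by
  obtain ⟨hPt, hP₁, hP₀⟩ := memLp_top_of_overlap hε (hP.mono hm).aestronglyMeasurable hPb
  set c : Ω → ℝ := -(a₁ / P + a₀ / (1 - P))
  have hc : StronglyMeasurable[m] c :=
    ((ha₁.measurable.div hP.measurable).add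
      (ha₀.measurable.div (measurable_const.sub hP.measurable))).neg.stronglyMeasurable
  have hcL : MemLp c 2 μ := by
    simp only [c, div_eq_mul_inv]
    exact ((hP₁.mul (r := 2) ha₁L).add (hP₀.mul (r := 2) ha₀L)).neg
  have hΨ : MemLp ((D - P) * aipwScore D Y P m₁ m₀) 2 μ :=
    (memLp_aipwScore hD hP₁ hP₀ hY₁ hY₀ hm₁₀L).mul (r := 2) (hD.sub hPt)
  have hid : aipwScore D Y P m₁ m₀ * aipwCorrection D P a₁ a₀
      =ᵐ[μ] c * ((D - P) * aipwScore D Y P m₁ m₀) := by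
    filter_upwards [aipwCorrection_eq_mul (D := D) (a₁ := a₁) (a₀ := a₀)
      (hPb.mono fun ω h => by linarith [h.1]) (hPb.mono fun ω h => by linarith [h.2])]
      with ω h
    rw [Pi.mul_apply, h]
    simp only [Pi.mul_apply]
    ring
  exact (condExp_congr_ae hid).trans <| condExp_mul_eq_zero_of_condExp_eq_zero hc
    (hcL.integrable_mul hΨ) (hΨ.integrable one_le_two)
    (condExp_sub_mul_aipwScore_eq_zero hm hε hD01 hD hP hPb hm₁₀ hY₁ hY₀ hm₁₀L h₁ h₀ hDP)

theorem condExp_sq_aipwScore_eq_add [IsFiniteMeasure μ] (hm : m ≤ mΩ) (hε : 0 < ε)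
    (hD : AEStronglyMeasurable D μ) (hD01 : ∀ ω, D ω = 0 ∨ D ω = 1) (hY : MemLp Y 2 μ)
    (hP : StronglyMeasurable[m] P) (hPb : ∀ᵐ ω ∂μ, ε ≤ P ω ∧ P ω ≤ 1 - ε)
    (hDP : μ[D | m] =ᵐ[μ] P)
    (hm₁ : StronglyMeasurable[m] m₁) (hm₀ : StronglyMeasurable[m] m₀)
    (hDY₁ : μ[D * Y | m] =ᵐ[μ] P * m₁) (hDY₀ : μ[(1 - D) * Y | m] =ᵐ[μ] (1 - P) * m₀)
    (ht₁ : StronglyMeasurable[m] t₁) (ht₀ : StronglyMeasurable[m] t₀)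
    (ht₁L : MemLp t₁ 2 μ) (ht₀L : MemLp t₀ 2 μ) :
    μ[fun ω => aipwScore D Y P t₁ t₀ ω ^ 2 | m] =ᵐ[μ]
      μ[fun ω => aipwScore D Y P m₁ m₀ ω ^ 2 | m]
        + μ[fun ω => aipwCorrection D P (t₁ - m₁) (t₀ - m₀) ω ^ 2 | m] := by
  have hPμ : AEStronglyMeasurable P μ := (hP.mono hm).aestronglyMeasurable
  obtain ⟨hPt, hP₁, hP₀⟩ := memLp_top_of_overlap hε hPμ hPb
  have hD₁ : MemLp D ∞ μ := memLp_top_of_eq_zero_or_eq_one hD hD01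
  have hD₀ : MemLp (1 - D) ∞ μ := (memLp_top_const 1).sub hD₁
  have hDY₁L : MemLp (D * Y) 2 μ := hY.mul hD₁
  have hDY₀L : MemLp ((1 - D) * Y) 2 μ := hY.mul hD₀
  have hm₁L : MemLp m₁ 2 μ := MemLp.of_mul_left_of_le_abs hε hPμ
    (hPb.mono fun ω h => h.1.trans (le_abs_self _)) ((hDY₁L.condExp one_le_two).ae_eq hDY₁)
  have hm₀L : MemLp m₀ 2 μ := MemLp.of_mul_left_of_le_abs hε (aestronglyMeasurable_const.sub hPμ)
    (hPb.mono fun ω h => (le_sub_comm.mp h.2).trans (le_abs_self _))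
    ((hDY₀L.condExp one_le_two).ae_eq hDY₀)
  have h₁ : μ[D * (Y - m₁) | m] =ᵐ[μ] 0 :=
    condExp_mul_sub_eq_zero hm₁ (hD₁.integrable le_top) (hDY₁L.integrable one_le_two)
      ((hm₁L.integrable one_le_two).mul_of_top_left hD₁) (hDY₁.trans (hDP.symm.mul .rfl))
  have h₀ : μ[(1 - D) * (Y - m₀) | m] =ᵐ[μ] 0 :=
    condExp_mul_sub_eq_zero hm₀ (hD₀.integrable le_top) (hDY₀L.integrable one_le_two)
      ((hm₀L.integrable one_le_two).mul_of_top_left hD₀)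
      (hDY₀.trans (((condExp_one_sub hm (hD₁.integrable le_top)).trans
        (Filter.EventuallyEq.rfl.sub hDP)).symm.mul .rfl))
  have hDP₀ : μ[D - P | m] =ᵐ[μ] 0 :=
    condExp_sub_eq_zero_of_condExp_eq hm (hD₁.integrable le_top) hP (hPt.integrable le_top) hDP
  rw [aipwScore_eq_add D Y P t₁ t₀ m₁ m₀]
  exact condExp_add_sq_of_condExp_mul_eq_zero
    (memLp_aipwScore hD₁ hP₁ hP₀ (hY.sub hm₁L) (hY.sub hm₀L) (hm₁L.sub hm₀L))
    (memLp_aipwCorrection hD₁ hP₁ hP₀ (ht₁L.sub hm₁L) (ht₀L.sub hm₀L))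
    (condExp_aipwScore_mul_aipwCorrection_eq_zero hm hε hD01 hD₁ hP hPb (hm₁.sub hm₀)
      (hY.sub hm₁L) (hY.sub hm₀L) (hm₁L.sub hm₀L) (ht₁.sub hm₁) (ht₀.sub hm₀)
      (ht₁L.sub hm₁L) (ht₀L.sub hm₀L) h₁ h₀ hDP₀)

theorem condExp_sq_aipwScore_eq_add_of_ae_eq [IsFiniteMeasure μ] (hm : m ≤ mΩ) (hε : 0 < ε)
    (hD : AEStronglyMeasurable D μ) (hD01 : ∀ ω, D ω = 0 ∨ D ω = 1) (hY : MemLp Y 2 μ)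
    (hp : p =ᵐ[μ] μ[D | m]) (hpb : ∀ᵐ ω ∂μ, ε ≤ p ω ∧ p ω ≤ 1 - ε)
    (hm₁ : StronglyMeasurable[m] m₁) (hm₀ : StronglyMeasurable[m] m₀)
    (hDY₁ : μ[D * Y | m] =ᵐ[μ] p * m₁) (hDY₀ : μ[(1 - D) * Y | m] =ᵐ[μ] (1 - p) * m₀)
    (ht₁ : StronglyMeasurable[m] t₁) (ht₀ : StronglyMeasurable[m] t₀)
    (ht₁L : MemLp t₁ 2 μ) (ht₀L : MemLp t₀ 2 μ) :
    μ[fun ω => aipwScore D Y p t₁ t₀ ω ^ 2 | m] =ᵐ[μ]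
      μ[fun ω => aipwScore D Y p m₁ m₀ ω ^ 2 | m]
        + μ[fun ω => aipwCorrection D p (t₁ - m₁) (t₀ - m₀) ω ^ 2 | m] := by
  have hPb : ∀ᵐ ω ∂μ, ε ≤ μ[D | m] ω ∧ μ[D | m] ω ≤ 1 - ε := by
    filter_upwards [hp, hpb] with ω h h'
    rwa [← h]
  have key := condExp_sq_aipwScore_eq_add hm hε hD hD01 hY stronglyMeasurable_condExp hPb .rfl
    hm₁ hm₀ (hDY₁.trans (hp.mul .rfl)) (hDY₀.trans ((Filter.EventuallyEq.rfl.sub hp).mul .rfl))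
    ht₁ ht₀ ht₁L ht₀L
  have hsq : ∀ {f g : Ω → ℝ}, f =ᵐ[μ] g → μ[fun ω => f ω ^ 2 | m] =ᵐ[μ] μ[fun ω => g ω ^ 2 | m] :=
    fun h => condExp_congr_ae (h.fun_comp (· ^ 2))
  exact (hsq (aipwScore_congr_ae hp)).trans <| key.trans <|
    ((hsq (aipwScore_congr_ae hp)).add (hsq (aipwCorrection_congr_ae hp))).symm

end AIPW

theorem variance_inflation_misspecified_or_general
    {Ω E : Type*} [MeasurableSpace Ω]
    [mE : MeasurableSpace E]
    (μ : Measure Ω) [IsProbabilityMeasure μ]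
    (X : Ω → E) (hX : Measurable X)
    (D Y1 Y0 Y : Ω → ℝ)
    (hD : Measurable D) (hD01 : ∀ ω, D ω = 0 ∨ D ω = 1)
    (hY1 : MemLp Y1 2 μ) (hY0 : MemLp Y0 2 μ)
    (hY : ∀ ω, Y ω = D ω * Y1 ω + (1 - D ω) * Y0 ω)
    (pX : Ω → ℝ)
    (hpX : pX =ᵐ[μ] μ[D | MeasurableSpace.comap X mE])
    (ε : ℝ) (hε : 0 < ε) (hpb : ∀ ω, ε ≤ pX ω ∧ pX ω ≤ 1 - ε)
    -- true outcome regressions m₁(X) = E[Y|X,D=1], m₀(X) = E[Y|X,D=0]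
    (m1 m0 : Ω → ℝ)
    (hm1meas : StronglyMeasurable[MeasurableSpace.comap X mE] m1)
    (hm0meas : StronglyMeasurable[MeasurableSpace.comap X mE] m0)
    (hm1 : μ[fun ω => D ω * Y ω | MeasurableSpace.comap X mE]
      =ᵐ[μ] fun ω => pX ω * m1 ω)
    (hm0 : μ[fun ω => (1 - D ω) * Y ω | MeasurableSpace.comap X mE]
      =ᵐ[μ] fun ω => (1 - pX ω) * m0 ω)
    -- misspecified outcome regressions, square-integrable functions of X
    (mtilde1 mtilde0 : E → ℝ)
    (hmt1 : Measurable mtilde1) (hmt0 : Measurable mtilde0)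
    (hmt1sq : MemLp (fun ω => mtilde1 (X ω)) 2 μ)
    (hmt0sq : MemLp (fun ω => mtilde0 (X ω)) 2 μ) :
    ((fun ω =>
        (μ[fun ω' => (D ω' * (Y ω' - mtilde1 (X ω')) / pX ω'
              - (1 - D ω') * (Y ω' - mtilde0 (X ω')) / (1 - pX ω')
              + mtilde1 (X ω') - mtilde0 (X ω')) ^ 2 | MeasurableSpace.comap X mE]) ω
        - (μ[fun ω' => (D ω' * (Y ω' - m1 ω') / pX ω'
              - (1 - D ω') * (Y ω' - m0 ω') / (1 - pX ω')
              + m1 ω' - m0 ω') ^ 2 | MeasurableSpace.comap X mE]) ω)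
      =ᵐ[μ]
      μ[fun ω' =>
          ((1 - D ω' / pX ω') * (mtilde1 (X ω') - m1 ω')
            - (1 - (1 - D ω') / (1 - pX ω')) * (mtilde0 (X ω') - m0 ω')) ^ 2
        | MeasurableSpace.comap X mE])
    ∧
    (∀ᵐ ω ∂μ, 0 ≤
        (μ[fun ω' => (D ω' * (Y ω' - mtilde1 (X ω')) / pX ω'
              - (1 - D ω') * (Y ω' - mtilde0 (X ω')) / (1 - pX ω')
              + mtilde1 (X ω') - mtilde0 (X ω')) ^ 2 | MeasurableSpace.comap X mE]) ω
        - (μ[fun ω' => (D ω' * (Y ω' - m1 ω') / pX ω'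
              - (1 - D ω') * (Y ω' - m0 ω') / (1 - pX ω')
              + m1 ω' - m0 ω') ^ 2 | MeasurableSpace.comap X mE]) ω) := by
  have hD₁ : MemLp D ∞ μ := memLp_top_of_eq_zero_or_eq_one hD.aestronglyMeasurable hD01
  have hYL : MemLp Y 2 μ := by
    rw [show Y = D * Y1 + (1 - D) * Y0 from funext hY]
    exact (hY1.mul hD₁).add (hY0.mul ((memLp_top_const 1).sub hD₁))
  have hXm : Measurable[MeasurableSpace.comap X mE] X := comap_measurable X
  have key := condExp_sq_aipwScore_eq_add_of_ae_eq hX.comap_le hε hD.aestronglyMeasurable hD01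
    hYL hpX (ae_of_all _ hpb) hm1meas hm0meas hm1 hm0 (hmt1.comp hXm).stronglyMeasurable
    (hmt0.comp hXm).stronglyMeasurable hmt1sq hmt0sq
  refine ⟨key.mono fun ω h => sub_eq_of_eq_add' h, ?_⟩
  filter_upwards [key, condExp_nonneg (m := MeasurableSpace.comap X mE)
    (ae_of_all μ fun ω => sq_nonneg (aipwCorrection D pX (fun ω => mtilde1 (X ω) - m1 ω)
      (fun ω => mtilde0 (X ω) - m0 ω) ω))] with ω h h₀
  exact h₀.trans_eq (sub_eq_of_eq_add' h).symm

/-- **Variance inflation with misspecified outcome regressions.**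
With `Ψ₁` the correct doubly robust score and
`Ψ₃ = D(Y-m̃₁(X))/p(X) - (1-D)(Y-m̃₀(X))/(1-p(X)) + m̃₁(X) - m̃₀(X)`
using the true propensity score but misspecified `m̃₁, m̃₀`, one has
`E[Ψ₃²|X] - E[Ψ₁²|X]
  = E[ ((1 - D/p(X))(m̃₁(X)-m₁(X)) - (1 - (1-D)/(1-p(X)))(m̃₀(X)-m₀(X)))² | X ] ≥ 0`. -/
theorem variance_inflation_misspecified_or
    {Ω E : Type*} [MeasurableSpace Ω] [StandardBorelSpace Ω] [Nonempty Ω]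
    [mE : MeasurableSpace E]
    (μ : Measure Ω) [IsProbabilityMeasure μ]
    (X : Ω → E) (hX : Measurable X)
    (D Y1 Y0 Y : Ω → ℝ)
    (hD : Measurable D) (hD01 : ∀ ω, D ω = 0 ∨ D ω = 1)
    (hY1m : Measurable Y1) (hY0m : Measurable Y0)
    (hY1 : MemLp Y1 2 μ) (hY0 : MemLp Y0 2 μ)
    (hY : ∀ ω, Y ω = D ω * Y1 ω + (1 - D ω) * Y0 ω)
    (hUnconf : CondIndepFun (MeasurableSpace.comap X mE) hX.comap_le
      (fun ω => (Y1 ω, Y0 ω)) D μ)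
    (pX : Ω → ℝ)
    (hpX : pX =ᵐ[μ] μ[D | MeasurableSpace.comap X mE])
    (ε : ℝ) (hε : 0 < ε) (hpb : ∀ ω, ε ≤ pX ω ∧ pX ω ≤ 1 - ε)
    -- true outcome regressions m₁(X) = E[Y|X,D=1], m₀(X) = E[Y|X,D=0]
    (m1 m0 : Ω → ℝ)
    (hm1meas : StronglyMeasurable[MeasurableSpace.comap X mE] m1)
    (hm0meas : StronglyMeasurable[MeasurableSpace.comap X mE] m0)
    (hm1 : μ[fun ω => D ω * Y ω | MeasurableSpace.comap X mE]
      =ᵐ[μ] fun ω => pX ω * m1 ω)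
    (hm0 : μ[fun ω => (1 - D ω) * Y ω | MeasurableSpace.comap X mE]
      =ᵐ[μ] fun ω => (1 - pX ω) * m0 ω)
    -- misspecified outcome regressions, square-integrable functions of X
    (mtilde1 mtilde0 : E → ℝ)
    (hmt1 : Measurable mtilde1) (hmt0 : Measurable mtilde0)
    (hmt1sq : MemLp (fun ω => mtilde1 (X ω)) 2 μ)
    (hmt0sq : MemLp (fun ω => mtilde0 (X ω)) 2 μ) :
    ((fun ω =>
        (μ[fun ω' => (D ω' * (Y ω' - mtilde1 (X ω')) / pX ω'
              - (1 - D ω') * (Y ω' - mtilde0 (X ω')) / (1 - pX ω')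
              + mtilde1 (X ω') - mtilde0 (X ω')) ^ 2 | MeasurableSpace.comap X mE]) ω
        - (μ[fun ω' => (D ω' * (Y ω' - m1 ω') / pX ω'
              - (1 - D ω') * (Y ω' - m0 ω') / (1 - pX ω')
              + m1 ω' - m0 ω') ^ 2 | MeasurableSpace.comap X mE]) ω)
      =ᵐ[μ]
      μ[fun ω' =>
          ((1 - D ω' / pX ω') * (mtilde1 (X ω') - m1 ω')
            - (1 - (1 - D ω') / (1 - pX ω')) * (mtilde0 (X ω') - m0 ω')) ^ 2
        | MeasurableSpace.comap X mE])
    ∧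
    (∀ᵐ ω ∂μ, 0 ≤
        (μ[fun ω' => (D ω' * (Y ω' - mtilde1 (X ω')) / pX ω'
              - (1 - D ω') * (Y ω' - mtilde0 (X ω')) / (1 - pX ω')
              + mtilde1 (X ω') - mtilde0 (X ω')) ^ 2 | MeasurableSpace.comap X mE]) ω
        - (μ[fun ω' => (D ω' * (Y ω' - m1 ω') / pX ω'
              - (1 - D ω') * (Y ω' - m0 ω') / (1 - pX ω')
              + m1 ω' - m0 ω') ^ 2 | MeasurableSpace.comap X mE]) ω) :=
  variance_inflation_misspecified_or_general (mE := mE) μ X hX D Y1 Y0 Y hD hD01 hY1 hY0 hY pX hpX ε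
    hε hpb m1 m0 hm1meas hm0meas hm1 hm0 mtilde1 mtilde0 hmt1 hmt0 hmt1sq hmt0sq
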